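/- arXiv:1305.3028 — 2 statements merged into one kernel-verified Lean document; each statement's English description precedes it below -/
import Mathlib

section
/- For every real x with −2 ≤ x ≤ 2, one has (1/(2π)) ∫_{−2}^{2} log|x − t| · √(4 − t²) dt = x²/4 − 1/2. Consequently, the total electrostatic potential U(x) = x²/2 − 2∫_{−2}^{2} log|x − t| · (√(4 − t²)/(2π)) dt is identically equal to 1 on [−2, 2]. -/
/-!
Substituting `t = 2 cos θ` turns the weight `√(4 - t²) dt` into `4 sin² θ dθ`, and writing
`x = 2 cos α`, the factorisation `2 cos α - 2 cos θ = 4 sin ((θ + α) / 2) sin ((θ - α) / 2)` splits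
`log |x - t|` into `log 4` plus two shifted copies of `log sin`. After the changes of variables
`u = (θ ± α) / 2` the two copies glue, by `π`-periodicity, into one integral of `log (sin u)`
against the trigonometric polynomial `4 sin² (2u - α)` over `[0, π]`. Of its moments only
`∫ log (sin u) du = -π log 2` and `∫ log (sin u) cos (4u) du = -π / 4` survive, giving `π cos 2α`.
-/

open Real MeasureTheory Set Interval

theorem AnalyticOnNhd.intervalIntegrable_log_mul {f g : ℝ → ℝ} {a b : ℝ}
    (hf : AnalyticOnNhd ℝ f [[a, b]]) (hg : ContinuousOn g [[a, b]]) :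
    IntervalIntegrable (fun u => Real.log (f u) * g u) volume a b :=
  hf.meromorphicOn.intervalIntegrable_log.mul_continuousOn hg

theorem integral_mul_sqrt_sq_sub_sq (g : ℝ → ℝ) {r : ℝ} (hr : 0 ≤ r) :
    ∫ t in -r..r, g t * √(r ^ 2 - t ^ 2) = ∫ θ in 0..π, g (r * cos θ) * (r * sin θ) ^ 2 := by
  have hsub := integral_Icc_deriv_smul_of_deriv_nonpos (f := fun θ => r * cos θ)
    (f' := fun θ => -(r * sin θ)) (g := fun t => g t * √(r ^ 2 - t ^ 2))
    (by fun_prop) (fun θ _ => by simpa using (hasDerivAt_cos θ).const_mul r)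
    (fun θ hθ => by have := sin_pos_of_pos_of_lt_pi hθ.1 hθ.2; nlinarith) pi_pos.le
  simp only [cos_pi, cos_zero, mul_neg, mul_one, smul_eq_mul] at hsub
  rw [intervalIntegral.integral_of_le (by linarith), intervalIntegral.integral_of_le pi_pos.le,
    ← integral_Icc_eq_integral_Ioc, ← integral_Icc_eq_integral_Ioc, ← neg_eq_iff_eq_neg.mpr hsub,
    ← integral_neg]
  refine setIntegral_congr_fun measurableSet_Icc fun θ hθ => ?_
  have hsqrt : √(r ^ 2 - (r * cos θ) ^ 2) = r * sin θ := by
    rw [show r ^ 2 - (r * cos θ) ^ 2 = (r * sin θ) ^ 2 by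
      linear_combination (-r ^ 2) * sin_sq_add_cos_sq θ]
    exact sqrt_sq (mul_nonneg hr (sin_nonneg_of_nonneg_of_le_pi hθ.1 hθ.2))
  rw [hsqrt]
  ring

theorem integral_log_sin_mul_sin_two_nat_mul (n : ℕ) :
    ∫ u in 0..π, log (sin u) * sin (2 * n * u) = 0 := by
  have hreflect (u : ℝ) :
      log (sin (π - u)) * sin (2 * n * (π - u)) = -(log (sin u) * sin (2 * n * u)) := by
    rw [sin_pi_sub, show 2 * n * (π - u) = (2 * n : ℕ) * π - 2 * n * u by push_cast; ring,
      sin_nat_mul_pi_sub, pow_mul]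
    simp
  have h := intervalIntegral.integral_comp_sub_left
    (fun u => log (sin u) * sin (2 * n * u)) (a := 0) (b := π) π
  simp only [hreflect, intervalIntegral.integral_neg, sub_self, sub_zero] at h
  linarith

theorem integral_log_sin_mul_cos_four : ∫ u in 0..π, log (sin u) * cos (4 * u) = -(π / 4) := by
  -- Integration by parts against `sin (4v) / 4`; the boundary term `sin (4v) log (sin v) / 4` is
  -- written as `(sin v log (sin v)) cos v cos 2v`, which is continuous at `0` and `π`.
  have hderiv : ∀ v ∈ Ioo 0 π, HasDerivAt
      (fun v => sin v * log (sin v) * (cos v * cos (2 * v)) - (v + sin (2 * v) + sin (4 * v) / 4) / 4)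
      (log (sin v) * cos (4 * v)) v := by
    intro v hv
    have hs : sin v ≠ 0 := (sin_pos_of_pos_of_lt_pi hv.1 hv.2).ne'
    have h := (((hasDerivAt_sin v).mul ((hasDerivAt_sin v).log hs)).mul
      ((hasDerivAt_cos v).mul ((hasDerivAt_cos (2 * v)).comp v ((hasDerivAt_id v).const_mul 2)))).sub
      ((((hasDerivAt_id v).add ((hasDerivAt_sin (2 * v)).comp v ((hasDerivAt_id v).const_mul 2))).add
        (((hasDerivAt_sin (4 * v)).comp v ((hasDerivAt_id v).const_mul 4)).div_const 4)).div_const 4)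
    refine h.congr_deriv ?_
    simp only [Function.comp_apply, Pi.mul_apply]
    rw [show 4 * v = 2 * (2 * v) by ring, cos_two_mul (2 * v), sin_two_mul, cos_two_mul]
    field_simp
    linear_combination log (sin v) * (4 - 24 * cos v ^ 2) * sin_sq_add_cos_sq v
  rw [intervalIntegral.integral_eq_sub_of_hasDerivAt_of_le pi_pos.le (by fun_prop) hderiv
    (AnalyticOnNhd.intervalIntegrable_log_mul (fun v _ => by fun_prop) (by fun_prop))]
  simp [show (4 : ℝ) * π = (4 : ℕ) * π by norm_num, show (2 : ℝ) * π = (2 : ℕ) * π by norm_num]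

theorem integral_log_sin_mul_sq_two_sin (c : ℝ) :
    ∫ u in 0..π, log (sin u) * (2 * sin (2 * u - c)) ^ 2
      = π / 2 * cos (2 * c) - 2 * π * log 2 := by
  have hexpand (u : ℝ) : log (sin u) * (2 * sin (2 * u - c)) ^ 2 = 2 * log (sin u)
      - 2 * cos (2 * c) * (log (sin u) * cos (4 * u))
      - 2 * sin (2 * c) * (log (sin u) * sin (2 * (2 : ℕ) * u)) := by
    rw [mul_pow, sin_sq_eq_half_sub, show 2 * (2 * u - c) = 4 * u - 2 * c by ring, cos_sub,
      show 2 * ((2 : ℕ) : ℝ) * u = 4 * u by push_cast; ring]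
    ring
  have h₁ : IntervalIntegrable (fun u => 2 * log (sin u)) volume 0 π :=
    intervalIntegrable_log_sin.const_mul 2
  have h₂ := (AnalyticOnNhd.intervalIntegrable_log_mul (f := sin) (a := 0) (b := π) (g := fun u => cos (4 * u))
    (fun u _ => by fun_prop) (by fun_prop)).const_mul (2 * cos (2 * c))
  have h₃ := (AnalyticOnNhd.intervalIntegrable_log_mul (f := sin) (a := 0) (b := π)
    (g := fun u => sin (2 * (2 : ℕ) * u)) (fun u _ => by fun_prop) (by fun_prop)).const_mul
    (2 * sin (2 * c))
  simp only [hexpand]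
  rw [intervalIntegral.integral_sub (h₁.sub h₂) h₃, intervalIntegral.integral_sub h₁ h₂,
    intervalIntegral.integral_const_mul, intervalIntegral.integral_const_mul,
    intervalIntegral.integral_const_mul, integral_log_sin_zero_pi, integral_log_sin_mul_cos_four,
    integral_log_sin_mul_sin_two_nat_mul]
  ring

theorem log_two_cos_sub_two_cos {α θ : ℝ} (h₁ : sin ((θ + α) / 2) ≠ 0)
    (h₂ : sin ((θ - α) / 2) ≠ 0) :
    log (2 * cos α - 2 * cos θ) = log 4 + log (sin ((θ + α) / 2)) + log (sin ((θ - α) / 2)) := by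
  have hfactor : 2 * cos α - 2 * cos θ = 4 * sin ((θ + α) / 2) * sin ((θ - α) / 2) := by
    rw [← mul_sub, cos_sub_cos, show (α - θ) / 2 = -((θ - α) / 2) by ring, sin_neg, add_comm α θ]
    ring
  rw [hfactor, log_mul (by positivity) h₂, log_mul (by norm_num) h₁]

theorem integral_log_sin_half_add_add_integral_log_sin_half_sub (c : ℝ) :
    (∫ θ in 0..π, log (sin ((θ + c) / 2)) * (2 * sin θ) ^ 2)
      + ∫ θ in 0..π, log (sin ((θ - c) / 2)) * (2 * sin θ) ^ 2
      = 2 * ∫ u in 0..π, log (sin u) * (2 * sin (2 * u - c)) ^ 2 := by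
  set g : ℝ → ℝ := fun u => log (sin u) * (2 * sin (2 * u - c)) ^ 2
  have hg : Function.Periodic g π := fun u => by
    simp only [g, sin_add_pi, log_neg_eq_log, show 2 * (u + π) - c = 2 * u - c + 2 * π by ring,
      sin_add_two_pi]
  have hplus : ∫ θ in 0..π, log (sin ((θ + c) / 2)) * (2 * sin θ) ^ 2
      = 2 * ∫ u in c / 2..π / 2 + c / 2, g u := by
    have h := intervalIntegral.integral_comp_div_add g (a := 0) (b := π) two_ne_zero (c / 2)
    rw [zero_div, zero_add, smul_eq_mul] at h
    rw [← h]
    congr 1 with θ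
    simp only [g, show θ / 2 + c / 2 = (θ + c) / 2 by ring, show 2 * ((θ + c) / 2) - c = θ by ring]
  have hminus : ∫ θ in 0..π, log (sin ((θ - c) / 2)) * (2 * sin θ) ^ 2
      = 2 * ∫ u in c / 2 - π / 2..c / 2, g u := by
    have h := intervalIntegral.integral_comp_sub_div g (a := 0) (b := π) two_ne_zero (c / 2)
    rw [zero_div, sub_zero, smul_eq_mul] at h
    rw [← h]
    congr 1 with θ
    simp only [g, show (θ - c) / 2 = -(c / 2 - θ / 2) by ring,
      show 2 * (c / 2 - θ / 2) - c = -θ by ring, sin_neg, log_neg_eq_log, mul_neg, neg_sq]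
  have hperiod := hg.intervalIntegral_add_eq (c / 2 - π / 2) 0
  rw [zero_add, show c / 2 - π / 2 + π = π / 2 + c / 2 by ring] at hperiod
  rw [hplus, hminus, ← mul_add, add_comm, intervalIntegral.integral_add_adjacent_intervals
    (AnalyticOnNhd.intervalIntegrable_log_mul (fun u _ => by fun_prop) (by fun_prop))
    (AnalyticOnNhd.intervalIntegrable_log_mul (fun u _ => by fun_prop) (by fun_prop)), hperiod]

theorem integral_log_two_cos_sub_two_cos_mul_sq {α : ℝ} (hα : α ∈ Icc 0 π) :
    ∫ θ in 0..π, log (2 * cos α - 2 * cos θ) * (2 * sin θ) ^ 2 = π * cos (2 * α) := by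
  have hsplit : ∀ᵐ θ, θ ∈ Ι 0 π → log (2 * cos α - 2 * cos θ) * (2 * sin θ) ^ 2
      = log 4 * (2 * sin θ) ^ 2 + log (sin ((θ + α) / 2)) * (2 * sin θ) ^ 2
        + log (sin ((θ - α) / 2)) * (2 * sin θ) ^ 2 := by
    filter_upwards [Measure.ae_ne volume α] with θ hθα hθ
    rw [uIoc_of_le pi_pos.le] at hθ
    have hplus : sin ((θ + α) / 2) ≠ 0 := by
      refine (sin_pos_of_pos_of_lt_pi (by linarith [hθ.1, hα.1]) ?_).ne'
      by_contra! h
      exact hθα (by linarith [hθ.2, hα.2])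
    have hminus : sin ((θ - α) / 2) ≠ 0 := by
      rw [Ne, sin_eq_zero_iff_of_lt_of_lt (by linarith [hθ.1, hα.2, pi_pos])
        (by linarith [hθ.2, hα.1, pi_pos])]
      exact fun h => hθα (by linarith)
    rw [log_two_cos_sub_two_cos hplus hminus]
    ring
  have hweight : ∫ θ in 0..π, (2 * sin θ) ^ 2 = 2 * π := by
    simp only [mul_pow, intervalIntegral.integral_const_mul, integral_sin_sq, sin_zero, cos_zero,
      sin_pi, cos_pi]
    ring
  have hintegrable {f : ℝ → ℝ} (hf : AnalyticOnNhd ℝ f univ) :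
      IntervalIntegrable (fun θ => log (f θ) * (2 * sin θ) ^ 2) volume 0 π :=
    (hf.mono (subset_univ _)).intervalIntegrable_log_mul (by fun_prop)
  rw [intervalIntegral.integral_congr_ae hsplit,
    intervalIntegral.integral_add ((hintegrable fun θ _ => by fun_prop).add (hintegrable fun θ _ => by fun_prop))
      (hintegrable fun θ _ => by fun_prop),
    intervalIntegral.integral_add (hintegrable fun θ _ => by fun_prop) (hintegrable fun θ _ => by fun_prop),
    intervalIntegral.integral_const_mul, hweight, add_assoc,
    integral_log_sin_half_add_add_integral_log_sin_half_sub, integral_log_sin_mul_sq_two_sin,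
    show (4 : ℝ) = 2 ^ 2 by norm_num, log_pow]
  push_cast
  ring

theorem integral_log_abs_sub_mul_sqrt_four_sub_sq {x : ℝ} (hx : x ∈ Icc (-2) 2) :
    ∫ t in (-2)..2, log |x - t| * √(4 - t ^ 2) = π * (x ^ 2 / 2 - 1) := by
  obtain ⟨α, hα, rfl⟩ : ∃ α ∈ Icc 0 π, 2 * cos α = x :=
    ⟨arccos (x / 2), ⟨arccos_nonneg _, arccos_le_pi _⟩,
      by rw [cos_arccos (by linarith [hx.1]) (by linarith [hx.2])]; ring⟩
  have hsub := integral_mul_sqrt_sq_sub_sq (fun t => log |2 * cos α - t|) zero_le_two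
  norm_num only at hsub
  rw [hsub]
  simp only [log_abs]
  rw [integral_log_two_cos_sub_two_cos_mul_sq hα, cos_two_mul]
  ring

/-- For `x ∈ [-2,2]`, the logarithmic potential of the semicircle density satisfies
`(1/(2π)) ∫_{-2}^{2} log|x-t| √(4-t²) dt = x²/4 - 1/2`; consequently the total
electrostatic potential `U(x) = x²/2 - 2∫ log|x-t| ρ(t) dt` equals `1` on `[-2,2]`. -/
theorem semicircle_log_potential (x : ℝ) (hx : x ∈ Set.Icc (-2 : ℝ) 2) :
    (1 / (2 * Real.pi)) * ∫ t in (-2 : ℝ)..2, Real.log |x - t| * Real.sqrt (4 - t ^ 2)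
      = x ^ 2 / 4 - 1 / 2 ∧
    x ^ 2 / 2 -
        2 * ∫ t in (-2 : ℝ)..2, Real.log |x - t| * (Real.sqrt (4 - t ^ 2) / (2 * Real.pi))
      = 1 := by
  have hpotential := integral_log_abs_sub_mul_sqrt_four_sub_sq hx
  simp_rw [← mul_div_assoc, intervalIntegral.integral_div, hpotential]
  constructor <;> field_simp <;> ring
end

section
/- Let t, β, δ ∈ ℂ satisfy 2β² + δ² = 2t, βδ² = 2, and δ ≠ 0. Let U ⊆ ℂ be open and let w, L : U → ℂ be holomorphic functions with w(z)² = (z − β)² − δ², w(z) ≠ 0, and exp(L(z)) = (β − z − w(z))/δ for all z ∈ U. Define G(z) = (1/3)·w(z)·(z² + βz + β² − 3t + δ²/2) − 2·L(z). Then G′(z) = (z + β)·w(z) for all z ∈ U. -/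
/-!
Differentiating the defining relations gives `w w' = z - β` (from `w² = (z-β)² - δ²`) and
`w L' = 1` (from `exp L = (β - z - w)/δ`, after multiplying its logarithmic derivative by `w`).
Substituting both into the derivative of `G` and multiplying by `3w` leaves a polynomial
identity in `z`, which holds exactly because `2β² + δ² = 2t` and `βδ² = 2`. The constraint
`βδ² = 2` also forces `δ ≠ 0` and hence `w ≠ 0`: at a branch point `z = β ± δ` the relation
`w w' = z - β` would give `0 = ±δ`.
-/

open Filter Topology

theorem HasDerivAt.two_mul_mul_eq_of_sq_eventuallyEq {𝕜 : Type*} [NontriviallyNormedField 𝕜]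
    {w p : 𝕜 → 𝕜} {w' p' z : 𝕜} (hw : HasDerivAt w w' z) (hp : HasDerivAt p p' z)
    (h : (fun x => w x ^ 2) =ᶠ[𝓝 z] p) : 2 * w z * w' = p' := by
  simpa using (hw.pow 2).unique (hp.congr_of_eventuallyEq h)

theorem HasDerivAt.mul_eq_of_cexp_eventuallyEq {L f : ℂ → ℂ} {L' f' z : ℂ}
    (hL : HasDerivAt L L' z) (hf : HasDerivAt f f' z)
    (h : (fun x => Complex.exp (L x)) =ᶠ[𝓝 z] f) : f z * L' = f' := by
  rw [← h.eq_of_nhds]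
  exact hL.cexp.unique (hf.congr_of_eventuallyEq h)

section CubicModel

variable {β δ z : ℂ} {w L : ℂ → ℂ} {w' L' : ℂ}

theorem HasDerivAt.mul_eq_sub_of_eventually_sq_eq (hw : HasDerivAt w w' z)
    (hsq : ∀ᶠ x in 𝓝 z, w x ^ 2 = (x - β) ^ 2 - δ ^ 2) : w z * w' = z - β := by
  have hp : HasDerivAt (fun x : ℂ => (x - β) ^ 2 - δ ^ 2) (2 * (z - β)) z := by
    simpa using (((hasDerivAt_id z).sub_const β).pow 2).sub_const (δ ^ 2)
  linear_combination hw.two_mul_mul_eq_of_sq_eventuallyEq hp hsq / 2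

theorem ne_zero_of_sq_eq_sub_sq_of_mul_eq_sub {s s' : ℂ} (hδ : δ ≠ 0)
    (hsq : s ^ 2 = (z - β) ^ 2 - δ ^ 2) (hmul : s * s' = z - β) : s ≠ 0 := by
  rintro rfl
  have hzβ : z - β = 0 := by rw [← hmul, zero_mul]
  rw [hzβ] at hsq
  exact hδ (pow_eq_zero_iff two_ne_zero |>.mp (by linear_combination hsq))

theorem HasDerivAt.mul_eq_one_of_eventually_cexp_eq (hδ : δ ≠ 0) (hw : HasDerivAt w w' z)
    (hL : HasDerivAt L L' z) (hmul : w z * w' = z - β)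
    (hexp : ∀ᶠ x in 𝓝 z, Complex.exp (L x) = (β - x - w x) / δ) : w z * L' = 1 := by
  have hf : HasDerivAt (fun x => (β - x - w x) / δ) ((-1 - w') / δ) z := by
    simpa using (((hasDerivAt_id z).const_sub β).sub hw).div_const δ
  have hlog := hL.mul_eq_of_cexp_eventuallyEq hf hexp
  have hne : β - z - w z ≠ 0 := by
    intro h0
    have := Complex.exp_ne_zero (L z)
    rw [hexp.self_of_nhds, h0, zero_div] at this
    exact this rfl
  have hlin : (β - z - w z) * L' = -1 - w' := by
    field_simp at hlog
    linear_combination hlog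
  -- multiplying `hlin` by `w z` turns its right-hand side into `β - z - w z`
  refine mul_left_cancel₀ hne ?_
  linear_combination w z * hlin - hmul

end CubicModel

theorem cubic_G_function_derivative_general (β δ t : ℂ)
    (h₁ : 2 * β ^ 2 + δ ^ 2 = 2 * t) (h₂ : β * δ ^ 2 = 2)
    (U : Set ℂ) (hU : IsOpen U) (w L : ℂ → ℂ)
    (hw : DifferentiableOn ℂ w U) (hL : DifferentiableOn ℂ L U)
    (hwsq : ∀ z ∈ U, (w z) ^ 2 = (z - β) ^ 2 - δ ^ 2)
    (hexp : ∀ z ∈ U, Complex.exp (L z) = (β - z - w z) / δ) :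
    ∀ z ∈ U,
      HasDerivAt
        (fun z : ℂ =>
          (1 / 3) * w z * (z ^ 2 + β * z + β ^ 2 - 3 * t + δ ^ 2 / 2) - 2 * L z)
        ((z + β) * w z) z := by
  intro z hz
  have hδ : δ ≠ 0 := by
    rintro rfl
    norm_num at h₂
  have hnhds : U ∈ 𝓝 z := hU.mem_nhds hz
  have hwz := ((hw z hz).differentiableAt hnhds).hasDerivAt
  have hLz := ((hL z hz).differentiableAt hnhds).hasDerivAt
  have hmul := hwz.mul_eq_sub_of_eventually_sq_eq (eventually_of_mem hnhds hwsq)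
  have hw0 := ne_zero_of_sq_eq_sub_sq_of_mul_eq_sub hδ (hwsq z hz) hmul
  have hmulL := hwz.mul_eq_one_of_eventually_cexp_eq hδ hLz hmul
    (eventually_of_mem hnhds hexp)
  have hP : HasDerivAt (fun x : ℂ => x ^ 2 + β * x + β ^ 2 - 3 * t + δ ^ 2 / 2)
      (2 * z + β) z := by
    simpa using (((((hasDerivAt_pow 2 z).add ((hasDerivAt_id z).const_mul β)).add_const
      (β ^ 2)).sub_const (3 * t)).add_const (δ ^ 2 / 2))
  refine (((hwz.const_mul (1 / 3 : ℂ)).mul hP).sub (hLz.const_mul 2)).congr_deriv ?_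
  refine mul_right_cancel₀ (mul_ne_zero three_ne_zero hw0) ?_
  linear_combination (z ^ 2 + β * z + β ^ 2 - 3 * t + δ ^ 2 / 2) * hmul - 6 * hmulL -
    (z + 2 * β) * hwsq z hz + (3 / 2) * (z - β) * h₁ + 3 * h₂

/-- Closed form of the `G`-function of the cubic model in the one-cut phase:
with `2β² + δ² = 2t`, `βδ² = 2`, `δ ≠ 0`, and holomorphic `w, L` on an open `U`
satisfying `w(z)² = (z-β)² - δ²`, `w(z) ≠ 0` and `exp(L(z)) = (β - z - w(z))/δ`,
the function `G(z) = (1/3)·w(z)·(z² + βz + β² - 3t + δ²/2) - 2·L(z)` has derivative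
`G'(z) = (z+β)·w(z)` on `U`. -/
theorem cubic_G_function_derivative (β δ t : ℂ)
    (h₁ : 2 * β ^ 2 + δ ^ 2 = 2 * t) (h₂ : β * δ ^ 2 = 2) (hδ : δ ≠ 0)
    (U : Set ℂ) (hU : IsOpen U) (w L : ℂ → ℂ)
    (hw : DifferentiableOn ℂ w U) (hL : DifferentiableOn ℂ L U)
    (hwsq : ∀ z ∈ U, (w z) ^ 2 = (z - β) ^ 2 - δ ^ 2)
    (hwne : ∀ z ∈ U, w z ≠ 0)
    (hexp : ∀ z ∈ U, Complex.exp (L z) = (β - z - w z) / δ) :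
    ∀ z ∈ U,
      HasDerivAt
        (fun z : ℂ =>
          (1 / 3) * w z * (z ^ 2 + β * z + β ^ 2 - 3 * t + δ ^ 2 / 2) - 2 * L z)
        ((z + β) * w z) z :=
  cubic_G_function_derivative_general β δ t h₁ h₂ U hU w L hw hL hwsq hexp
end
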